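/- Partial-trace gluing identity for coherent exponentials: for spinors z, z' ∈ ℂ² and g, h ∈ SU(2), ∫_{ℂ²}∫_{ℂ²} exp([z|g|w₁⟩ + ⟨w₁|w₂] + [w₂|h|z'⟩) dμ(w₁) dμ(w₂) = exp([z|gh|z'⟩), where dμ is the Gaussian measure on ℂ², ⟨w₁|w₂] is the sesquilinear pairing of w₁ with the dual of w₂, and [·|·⟩ is the bilinear spinor bracket. -/

import Mathlib

open ComplexConjugate MeasureTheory

/-- The bilinear spinor bracket `[w|z⟩ = -w¹ z⁰ + w⁰ z¹`. -/
def braket (w z : Fin 2 → ℂ) : ℂ := - w 1 * z 0 + w 0 * z 1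

/-- The Hermitian inner product `⟨w|z⟩`. -/
def herm (w z : Fin 2 → ℂ) : ℂ := conj (w 0) * z 0 + conj (w 1) * z 1

/-- The dual spinor `ς z = (-conj z¹, conj z⁰)`. -/
def dualSpinor (z : Fin 2 → ℂ) : Fin 2 → ℂ := ![-(conj (z 1)), conj (z 0)]

/-!
Each integral is a Gaussian integral on `ℂ²` with a source term linear in `w` and in `conj w`:
`∫ exp(a·conj w + b·w) dμ(w) = exp(a·b)`. Integrating out `w₂` turns `⟨w₁|w₂] + [w₂|h|z'⟩`
into `⟨w₁|h|z'⟩` (the reproducing kernel of the Bargmann–Fock space), and integrating out `w₁`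
then turns `[z|g|w₁⟩ + ⟨w₁|h z'⟩` into `[z|g h|z'⟩`.
-/

open Matrix

theorem integral_cexp_neg_conj_mul_self_add (α β : ℂ) :
    ∫ w : ℂ, Complex.exp (-(conj w * w) + (α * conj w + β * w))
      = Real.pi * Complex.exp (α * β) := by
  rw [← (Complex.volume_preserving_equiv_real_prod.symm
    Complex.measurableEquivRealProd).integral_comp']
  -- with `w = x + i y` the integrand splits into two real Gaussians
  have hsplit : ∀ p : ℝ × ℝ,
      Complex.exp (-(conj (Complex.measurableEquivRealProd.symm p) *
          Complex.measurableEquivRealProd.symm p) +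
        (α * conj (Complex.measurableEquivRealProd.symm p) +
          β * Complex.measurableEquivRealProd.symm p))
      = Complex.exp (-1 * (p.1 : ℂ) ^ 2 + (α + β) * p.1 + 0) *
        Complex.exp (-1 * (p.2 : ℂ) ^ 2 + Complex.I * (β - α) * p.2 + 0) := by
    rintro ⟨x, y⟩
    have hw : Complex.measurableEquivRealProd.symm (x, y) = x + y * Complex.I := by
      simp [Complex.measurableEquivRealProd_symm_apply, Complex.mk_eq_add_mul_I]
    rw [hw, ← Complex.exp_add]
    congr 1
    simp only [map_add, map_mul, Complex.conj_ofReal, Complex.conj_I]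
    linear_combination (y : ℂ) ^ 2 * Complex.I_sq
  have hre : (-1 : ℂ).re < 0 := by norm_num
  have hπ : (Real.pi : ℂ) ≠ 0 := Complex.ofReal_ne_zero.mpr Real.pi_ne_zero
  simp only [hsplit]
  rw [Measure.volume_eq_prod, integral_prod_mul
      (fun x : ℝ => Complex.exp (-1 * (x : ℂ) ^ 2 + (α + β) * x + 0))
      (fun y : ℝ => Complex.exp (-1 * (y : ℂ) ^ 2 + Complex.I * (β - α) * y + 0)),
    integral_cexp_quadratic hre, integral_cexp_quadratic hre, neg_neg, div_one,
    mul_mul_mul_comm, ← Complex.cpow_add _ _ hπ, ← Complex.exp_add,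
    show (1 / 2 + 1 / 2 : ℂ) = 1 by norm_num, Complex.cpow_one]
  congr 2
  linear_combination (β - α) ^ 2 / 4 * Complex.I_sq

theorem integral_cexp_sum_neg_conj_mul_self_add {ι : Type*} [Fintype ι] (a b : ι → ℂ) :
    ∫ w : ι → ℂ, Complex.exp (∑ i, (-(conj (w i) * w i) + (a i * conj (w i) + b i * w i)))
      = (Real.pi : ℂ) ^ Fintype.card ι * Complex.exp (∑ i, a i * b i) := by
  simp_rw [Complex.exp_sum]
  rw [integral_fintype_prod_volume_eq_prod
    (fun i w => Complex.exp (-(conj w * w) + (a i * conj w + b i * w)))]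
  simp_rw [integral_cexp_neg_conj_mul_self_add, Finset.prod_mul_distrib, Finset.prod_const,
    Finset.card_univ]

theorem integral_gaussian_mul_cexp_linear (a b : Fin 2 → ℂ) :
    ∫ w : Fin 2 → ℂ, ((Real.pi : ℂ) ^ 2)⁻¹ * Complex.exp (-herm w w) *
        Complex.exp (∑ i, (a i * conj (w i) + b i * w i))
      = Complex.exp (∑ i, a i * b i) := by
  have hπ : (Real.pi : ℂ) ^ 2 ≠ 0 := pow_ne_zero _ (Complex.ofReal_ne_zero.mpr Real.pi_ne_zero)
  have hexp : ∀ w : Fin 2 → ℂ, Complex.exp (-herm w w) *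
      Complex.exp (∑ i, (a i * conj (w i) + b i * w i))
      = Complex.exp (∑ i, (-(conj (w i) * w i) + (a i * conj (w i) + b i * w i))) := by
    intro w
    rw [← Complex.exp_add]
    simp only [herm, Fin.sum_univ_two]
    ring_nf
  simp_rw [mul_assoc, hexp]
  rw [integral_const_mul, integral_cexp_sum_neg_conj_mul_self_add, Fintype.card_fin,
    inv_mul_cancel_left₀ hπ]

theorem integral_gaussian_mul_cexp_herm_dualSpinor_add_braket (w v : Fin 2 → ℂ) :
    ∫ u : Fin 2 → ℂ, ((Real.pi : ℂ) ^ 2)⁻¹ * Complex.exp (-herm u u) *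
        Complex.exp (herm w (dualSpinor u) + braket u v)
      = Complex.exp (herm w v) := by
  have hlin : ∀ u : Fin 2 → ℂ, herm w (dualSpinor u) + braket u v
      = ∑ i, (![conj (w 1), -conj (w 0)] i * conj (u i) + ![v 1, -v 0] i * u i) := by
    intro u
    simp only [herm, dualSpinor, braket, Fin.sum_univ_two, cons_val_zero, cons_val_one,
      cons_val_fin_one]
    ring
  simp_rw [hlin]
  rw [integral_gaussian_mul_cexp_linear]
  congr 1
  simp only [herm, Fin.sum_univ_two, cons_val_zero, cons_val_one, cons_val_fin_one]
  ring

theorem integral_gaussian_mul_cexp_braket_mulVec_add_herm (z v : Fin 2 → ℂ)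
    (g : Matrix (Fin 2) (Fin 2) ℂ) :
    ∫ w : Fin 2 → ℂ, ((Real.pi : ℂ) ^ 2)⁻¹ * Complex.exp (-herm w w) *
        Complex.exp (braket z (g *ᵥ w) + herm w v)
      = Complex.exp (braket z (g *ᵥ v)) := by
  have hlin : ∀ w : Fin 2 → ℂ, braket z (g *ᵥ w) + herm w v
      = ∑ i, (v i * conj (w i) + braket z (gᵀ i) * w i) := by
    intro w
    simp only [herm, braket, mulVec, dotProduct, Fin.sum_univ_two, transpose_apply]
    ring
  simp_rw [hlin]
  rw [integral_gaussian_mul_cexp_linear]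
  congr 1
  simp only [braket, mulVec, dotProduct, Fin.sum_univ_two, transpose_apply]
  ring

theorem gluing_gaussian_identity_general (z z' : Fin 2 → ℂ)
    (g h : Matrix (Fin 2) (Fin 2) ℂ) :
    ∫ w₁ : Fin 2 → ℂ, ∫ w₂ : Fin 2 → ℂ,
      (((Real.pi : ℂ)) ^ 2)⁻¹ * Complex.exp (-herm w₁ w₁) *
        (((Real.pi : ℂ)) ^ 2)⁻¹ * Complex.exp (-herm w₂ w₂) *
        Complex.exp (braket z (g.mulVec w₁) + herm w₁ (dualSpinor w₂) +
          braket w₂ (h.mulVec z'))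
    = Complex.exp (braket z ((g * h).mulVec z')) := by
  have hinner : ∀ w₁ : Fin 2 → ℂ, ∫ w₂ : Fin 2 → ℂ,
      ((Real.pi : ℂ) ^ 2)⁻¹ * Complex.exp (-herm w₁ w₁) *
        ((Real.pi : ℂ) ^ 2)⁻¹ * Complex.exp (-herm w₂ w₂) *
        Complex.exp (braket z (g *ᵥ w₁) + herm w₁ (dualSpinor w₂) + braket w₂ (h *ᵥ z'))
      = ((Real.pi : ℂ) ^ 2)⁻¹ * Complex.exp (-herm w₁ w₁) *
        Complex.exp (braket z (g *ᵥ w₁) + herm w₁ (h *ᵥ z')) := by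
    intro w₁
    calc _ = ∫ w₂ : Fin 2 → ℂ, ((Real.pi : ℂ) ^ 2)⁻¹ * Complex.exp (-herm w₁ w₁) *
            Complex.exp (braket z (g *ᵥ w₁)) *
          (((Real.pi : ℂ) ^ 2)⁻¹ * Complex.exp (-herm w₂ w₂) *
            Complex.exp (herm w₁ (dualSpinor w₂) + braket w₂ (h *ᵥ z'))) := by
          congr 1
          funext w₂
          rw [add_assoc, Complex.exp_add]
          ring
      _ = _ := by
          rw [integral_const_mul, integral_gaussian_mul_cexp_herm_dualSpinor_add_braket,
            mul_assoc _ (Complex.exp _), ← Complex.exp_add]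
  simp_rw [hinner]
  rw [integral_gaussian_mul_cexp_braket_mulVec_add_herm, Matrix.mulVec_mulVec]

/-- the partial-trace gluing identity for coherent exponentials:
for `g, h ∈ SU(2)` and spinors `z, z'`,
`∫∫ exp([z|g|w₁⟩ + ⟨w₁|w₂] + [w₂|h|z'⟩) dμ(w₁) dμ(w₂) = exp([z|gh|z'⟩)`,
with the Gaussian measure `dμ(w) = π⁻² e^{-⟨w|w⟩} d⁴w` on each factor. -/
theorem gluing_gaussian_identity (z z' : Fin 2 → ℂ)
    (g h : Matrix (Fin 2) (Fin 2) ℂ)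
    (hg : g * g.conjTranspose = 1 ∧ g.det = 1)
    (hh : h * h.conjTranspose = 1 ∧ h.det = 1) :
    ∫ w₁ : Fin 2 → ℂ, ∫ w₂ : Fin 2 → ℂ,
      (((Real.pi : ℂ)) ^ 2)⁻¹ * Complex.exp (-herm w₁ w₁) *
        (((Real.pi : ℂ)) ^ 2)⁻¹ * Complex.exp (-herm w₂ w₂) *
        Complex.exp (braket z (g.mulVec w₁) + herm w₁ (dualSpinor w₂) +
          braket w₂ (h.mulVec z'))
    = Complex.exp (braket z ((g * h).mulVec z')) :=
  gluing_gaussian_identity_general z z' g h
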